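/- arXiv:2306.15284 — 2 statements merged into one kernel-verified Lean document; each statement's English description precedes it below -/
import Mathlib

section
/- Let T be the shortcut Collatz map, j ≥ 2, and let n < 2^j be a positive integer such that n, T(n), …, T^{j−1}(n) contains exactly one even term. Then n ≥ 2^{j/(1+ρ)} − 2, where ρ = log 3 / log 2. -/
/-!
If `k` is the position of the only even term, the runs of odd terms before and after it
multiply `m + 1` by `3/2` per step, so `2 ^ k ∣ n + 1` and `2 ^ (j - 1 - k) ∣ T^[k+1] n + 1`.
Combining the two runs through the even step gives `2 ^ j ≤ 3 ^ k * (n + 1) + 2 ^ k`, and with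
`3 ^ k = (2 ^ k) ^ ρ` and `2 ^ k ≤ n + 1` this forces `n + 1 ≥ 2 ^ (j / (1 + ρ)) - 1`.
-/

/-- The shortcut Collatz map. -/
def T (n : ℕ) : ℕ := if n % 2 = 1 then (3 * n + 1) / 2 else n / 2

lemma two_mul_T_of_odd {m : ℕ} (h : m % 2 = 1) : 2 * T m = 3 * m + 1 := by
  simp only [T, h, if_true]
  omega

lemma two_mul_T_of_even {m : ℕ} (h : m % 2 = 0) : 2 * T m = m := by
  simp only [T, h, zero_ne_one, if_false]
  omega

lemma two_pow_mul_iterate_T_add_one {s m : ℕ} (hodd : ∀ i < s, T^[i] m % 2 = 1) :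
    2 ^ s * (T^[s] m + 1) = 3 ^ s * (m + 1) := by
  induction s generalizing m with
  | zero => simp
  | succ s ih =>
    have hT : 2 * T m = 3 * m + 1 := two_mul_T_of_odd (hodd 0 s.succ_pos)
    have hrun := ih (m := T m) fun i hi => hodd (i + 1) (by omega)
    calc 2 ^ (s + 1) * (T^[s + 1] m + 1) = 2 * (2 ^ s * (T^[s] (T m) + 1)) := by
          rw [Function.iterate_succ_apply]; ring
      _ = 3 ^ s * (2 * T m + 2) := by rw [hrun]; ring
      _ = 3 ^ (s + 1) * (m + 1) := by rw [hT]; ring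

lemma two_pow_le_add_one_of_iterate_T_odd {s m : ℕ} (hodd : ∀ i < s, T^[i] m % 2 = 1) :
    2 ^ s ≤ m + 1 := by
  have hdvd : 2 ^ s ∣ 3 ^ s * (m + 1) := ⟨_, (two_pow_mul_iterate_T_add_one hodd).symm⟩
  exact Nat.le_of_dvd m.succ_pos <|
    ((by decide : Nat.Coprime 2 3).pow s s).dvd_of_dvd_mul_left hdvd

lemma two_pow_le_of_iterate_T_odd_except {j k m : ℕ} (hk : k < j) (heven : T^[k] m % 2 = 0)
    (hodd : ∀ i < j, i ≠ k → T^[i] m % 2 = 1) :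
    2 ^ j ≤ 3 ^ k * (m + 1) + 2 ^ k := by
  have head : 2 ^ k * (T^[k] m + 1) = 3 ^ k * (m + 1) :=
    two_pow_mul_iterate_T_add_one fun i hi => hodd i (by omega) (by omega)
  have tail : 2 ^ (j - 1 - k) ≤ T^[k + 1] m + 1 :=
    two_pow_le_add_one_of_iterate_T_odd fun i hi => by
      rw [← Function.iterate_add_apply]
      exact hodd (i + (k + 1)) (by omega) (by omega)
  have step : 2 * T^[k + 1] m = T^[k] m := by
    rw [Function.iterate_succ_apply']
    exact two_mul_T_of_even heven
  calc 2 ^ j = 2 ^ (k + 1) * 2 ^ (j - 1 - k) := by rw [← pow_add]; congr 1; omega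
    _ ≤ 2 ^ (k + 1) * (T^[k + 1] m + 1) := Nat.mul_le_mul_left _ tail
    _ = 2 ^ k * (T^[k] m + 1) + 2 ^ k := by rw [← step]; ring
    _ = 3 ^ k * (m + 1) + 2 ^ k := by rw [head]

lemma le_add_one_of_rpow_le_rpow_mul_add {ρ a x M : ℝ} (hρ : 1 ≤ ρ) (ha : 1 ≤ a) (hax : a ≤ x)
    (hM : M ^ (1 + ρ) ≤ a ^ ρ * x + a) : M ≤ x + 1 := by
  rcases le_or_gt M a with hMa | haM
  · linarith
  by_contra! hxM
  have hM0 : 0 < M := by linarith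
  have haρ : a ^ ρ ≤ M ^ ρ := Real.rpow_le_rpow (by linarith) haM.le (by linarith)
  have hMρ : M ≤ M ^ ρ := Real.self_le_rpow_of_one_le (by linarith) hρ
  rw [Real.rpow_add hM0, Real.rpow_one] at hM
  -- `M ^ ρ * (M - x) ≤ M` from `hM`, while `M - x > 1` and `M ^ ρ ≥ M`
  nlinarith

lemma three_pow_eq_two_pow_rpow_logb (k : ℕ) : (3 : ℝ) ^ k = ((2 : ℝ) ^ k) ^ Real.logb 2 3 := by
  rw [← Real.rpow_natCast_mul zero_le_two, mul_comm, Real.rpow_mul zero_le_two,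
    Real.rpow_logb two_pos (by norm_num) three_pos, Real.rpow_natCast]

theorem stmt_10_general (j n : ℕ)
    (hone : ((Finset.range j).filter (fun i => (T^[i] n) % 2 = 0)).card = 1) :
    (2 : ℝ) ^ ((j : ℝ) / (1 + Real.log 3 / Real.log 2)) - 2 ≤ (n : ℝ) := by
  obtain ⟨k, hk⟩ := Finset.card_eq_one.mp hone
  have hkj : k < j ∧ T^[k] n % 2 = 0 := by
    simpa using (Finset.ext_iff.mp hk k).mpr (Finset.mem_singleton_self k)
  have hodd : ∀ i < j, i ≠ k → T^[i] n % 2 = 1 := fun i hij hik => by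
    have := (Finset.ext_iff.mp hk i).not.mpr (by simpa using hik)
    simp only [Finset.mem_filter, Finset.mem_range, not_and] at this
    omega
  have hmain : ((2 ^ j : ℕ) : ℝ) ≤ ((3 ^ k * (n + 1) + 2 ^ k : ℕ) : ℝ) :=
    Nat.cast_le.mpr (two_pow_le_of_iterate_T_odd_except hkj.1 hkj.2 hodd)
  have hhead : ((2 ^ k : ℕ) : ℝ) ≤ ((n + 1 : ℕ) : ℝ) :=
    Nat.cast_le.mpr (two_pow_le_add_one_of_iterate_T_odd fun i hi => hodd i (by omega) (by omega))
  have hρ : 1 ≤ Real.logb 2 3 := (Real.le_logb_iff_rpow_le one_lt_two three_pos).mpr (by norm_num)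
  push_cast at hmain hhead
  rw [three_pow_eq_two_pow_rpow_logb, ← Real.rpow_natCast 2 j] at hmain
  have hpow : ((2 : ℝ) ^ ((j : ℝ) / (1 + Real.logb 2 3))) ^ (1 + Real.logb 2 3) = 2 ^ (j : ℝ) := by
    rw [← Real.rpow_mul zero_le_two, div_mul_cancel₀ _ (by positivity)]
  have := le_add_one_of_rpow_le_rpow_mul_add hρ (one_le_pow₀ one_le_two) hhead (hpow ▸ hmain)
  change (2 : ℝ) ^ ((j : ℝ) / (1 + Real.logb 2 3)) - 2 ≤ n
  linarith

theorem stmt_10 (j n : ℕ) (hj : 2 ≤ j) (hn : 0 < n) (hlt : n < 2 ^ j)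
    (hone : ((Finset.range j).filter (fun i => (T^[i] n) % 2 = 0)).card = 1) :
    (2 : ℝ) ^ ((j : ℝ) / (1 + Real.log 3 / Real.log 2)) - 2 ≤ (n : ℝ) :=
  stmt_10_general j n hone
end

section
/- If the set of Wieferich primes is infinite, then the set of μ-hits is infinite; in particular there are infinitely many distinct triples of the form (1, 2^L − 1, 2^L) with log(2^L) > μ((2^L − 1)·2^L). -/
/-!
Let μ be additive with μ(p^k) = log p + log k. A prime power p^k exactly dividing n contributes
k log p - log p - log k ≥ 0 to log n - μ n, and at least log p - log 2 when k ≥ 2.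
If p - 1 ∣ L for the Wieferich primes 1093, 3511 and q, their squares divide 2^L - 1, so
μ((2^L - 1) 2^L) < L log 2 + log 2 + log L - log (1093 · 3511 · q / 8). All p - 1 are even, so
L = lcm(1092, 3510, q - 1) ≤ 49140 (q - 1) / 2, which keeps 16 L ≤ 1093 · 3511 · q and makes
(1, 2^L - 1, 2^L) a μ-hit. As L ≥ q - 1, infinitely many Wieferich primes give infinitely many L.
-/

open Real Finset

lemma mul_le_pow_of_two_le {p k : ℕ} (hp : 2 ≤ p) (hk : 1 ≤ k) : k * p ≤ p ^ k := by
  obtain ⟨j, rfl⟩ := Nat.exists_eq_add_of_le' hk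
  calc (j + 1) * p ≤ 2 ^ j * p := Nat.mul_le_mul_right p Nat.lt_two_pow_self
    _ ≤ p ^ j * p := Nat.mul_le_mul_right p (Nat.pow_le_pow_left hp j)
    _ = p ^ (j + 1) := (pow_succ p j).symm

lemma mul_sq_le_two_mul_pow {p k : ℕ} (hp : 2 ≤ p) (hk : 2 ≤ k) :
    k * p ^ 2 ≤ 2 * p ^ k := by
  obtain ⟨j, rfl⟩ := Nat.exists_eq_add_of_le' hk
  calc (j + 2) * p ^ 2 ≤ 2 * 2 ^ j * p ^ 2 := by
        gcongr
        have := j.lt_two_pow_self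
        omega
    _ ≤ 2 * p ^ j * p ^ 2 := by gcongr
    _ = 2 * p ^ (j + 2) := by ring

lemma log_add_log_le_mul_log {p k : ℕ} (hp : 2 ≤ p) (hk : 1 ≤ k) :
    log p + log k ≤ k * log p := by
  have h := log_le_log (by positivity) (Nat.cast_le (α := ℝ).2 (mul_le_pow_of_two_le hp hk))
  push_cast at h
  rwa [log_mul (by positivity) (by positivity), log_pow, add_comm] at h

lemma log_sub_log_two_le {p k : ℕ} (hp : 2 ≤ p) (hk : 2 ≤ k) :
    log p - log 2 ≤ k * log p - (log p + log k) := by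
  have h := log_le_log (by positivity) (Nat.cast_le (α := ℝ).2 (mul_sq_le_two_mul_pow hp hk))
  push_cast at h
  rw [log_mul (by positivity) (by positivity), log_mul (by positivity) (by positivity),
    log_pow, log_pow] at h
  push_cast at h
  linarith

lemma eq_sum_factorization_of_additive (μ : ℕ → ℝ)
    (hμp : ∀ p n : ℕ, p.Prime → 0 < n → μ (p ^ n) = log p + log n)
    (hμmul : ∀ m n : ℕ, 0 < m → 0 < n → Nat.Coprime m n → μ (m * n) = μ m + μ n)
    {n : ℕ} (hn : n ≠ 0) :
    μ n = n.factorization.sum fun p k => log p + log k := by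
  have h1 : μ 1 = 0 := by linarith [hμmul 1 1 one_pos one_pos (Nat.coprime_one_left 1)]
  have hmul : ∀ x y : ℕ, x.Coprime y → Multiplicative.ofAdd (μ (x * y)) =
      Multiplicative.ofAdd (μ x) * Multiplicative.ofAdd (μ y) := by
    intro x y hxy
    rcases Nat.eq_zero_or_pos x with rfl | hx
    · simp [(Nat.coprime_zero_left y).1 hxy, h1]
    rcases Nat.eq_zero_or_pos y with rfl | hy
    · simp [(Nat.coprime_zero_right x).1 hxy, h1]
    rw [hμmul x y hx hy hxy, ofAdd_add]
  have h := congrArg Multiplicative.toAdd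
    (Nat.multiplicative_factorization (fun n => Multiplicative.ofAdd (μ n)) hmul (by simp [h1]) hn)
  rw [Finsupp.prod, toAdd_prod] at h
  refine h.trans (sum_congr rfl fun p hp => ?_)
  exact hμp p _ (Nat.prime_of_mem_primeFactors hp)
    (Nat.pos_of_ne_zero (Finsupp.mem_support_iff.1 hp))

lemma sum_log_sub_log_two_le_log_sub (μ : ℕ → ℝ)
    (hμp : ∀ p n : ℕ, p.Prime → 0 < n → μ (p ^ n) = log p + log n)
    (hμmul : ∀ m n : ℕ, 0 < m → 0 < n → Nat.Coprime m n → μ (m * n) = μ m + μ n)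
    {n : ℕ} (hn : n ≠ 0) {S : Finset ℕ} (hS : ∀ p ∈ S, p.Prime ∧ p ^ 2 ∣ n) :
    ∑ p ∈ S, (log p - log 2) ≤ log n - μ n := by
  rw [log_nat_eq_sum_factorization, eq_sum_factorization_of_additive μ hμp hμmul hn,
    Finsupp.sum, Finsupp.sum, ← sum_sub_distrib]
  have hsub : S ⊆ n.factorization.support := fun p hp =>
    Nat.support_factorization n ▸ Nat.mem_primeFactors.2
      ⟨(hS p hp).1, (dvd_pow_self p two_ne_zero).trans (hS p hp).2, hn⟩
  calc ∑ p ∈ S, (log p - log 2)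
      ≤ ∑ p ∈ S, (n.factorization p * log p - (log p + log (n.factorization p))) :=
        sum_le_sum fun p hp => log_sub_log_two_le (hS p hp).1.two_le
          (((hS p hp).1.pow_dvd_iff_le_factorization hn).1 (hS p hp).2)
    _ ≤ _ := sum_le_sum_of_subset_of_nonneg hsub fun p hp _ => by
        have hk := Nat.pos_of_ne_zero (Finsupp.mem_support_iff.1 hp)
        have hp := Nat.prime_of_mem_primeFactors (Nat.support_factorization n ▸ hp)
        linarith [log_add_log_le_mul_log hp.two_le hk]

lemma mu_two_pow_sub_one_mul_two_pow_lt_log (μ : ℕ → ℝ)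
    (hμp : ∀ p n : ℕ, p.Prime → 0 < n → μ (p ^ n) = log p + log n)
    (hμmul : ∀ m n : ℕ, 0 < m → 0 < n → Nat.Coprime m n → μ (m * n) = μ m + μ n)
    {L : ℕ} (hL : 0 < L) {S : Finset ℕ} (hS : ∀ p ∈ S, p.Prime ∧ p ^ 2 ∣ 2 ^ L - 1)
    (hprod : 2 ^ (#S + 1) * L ≤ ∏ p ∈ S, p) :
    μ ((2 ^ L - 1) * 2 ^ L) < log (2 ^ L) := by
  have h2L : 1 < 2 ^ L := Nat.one_lt_two_pow hL.ne'
  have hcop : Nat.Coprime (2 ^ L - 1) (2 ^ L) := by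
    have := Nat.coprime_self_add_right.2 (Nat.coprime_one_right (2 ^ L - 1))
    rwa [Nat.sub_add_cancel h2L.le] at this
  have hgain := sum_log_sub_log_two_le_log_sub μ hμp hμmul (by omega) hS
  have hlt : log ((2 ^ L - 1 : ℕ) : ℝ) < log (2 ^ L) := by
    apply log_lt_log (by exact_mod_cast (by omega : 0 < 2 ^ L - 1))
    rw [Nat.cast_sub h2L.le]
    push_cast
    linarith
  have hprodlog : (#S + 1) * log 2 + log L ≤ ∑ p ∈ S, log p := by
    have h := log_le_log (by positivity) (Nat.cast_le (α := ℝ).2 hprod)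
    push_cast at h
    rw [log_mul (by positivity) (by positivity), log_pow, log_prod
      fun p hp => Nat.cast_ne_zero.2 (hS p hp).1.ne_zero] at h
    exact_mod_cast h
  rw [sum_sub_distrib, sum_const, nsmul_eq_mul] at hgain
  rw [hμmul _ _ (by omega) (by positivity) hcop, hμp 2 L Nat.prime_two hL, log_pow]
  rw [log_pow] at hlt
  push_cast at hprodlog hlt ⊢
  linarith

lemma two_mul_lcm_le_mul {a b : ℕ} (ha : 2 ∣ a) (hb : 2 ∣ b) : 2 * Nat.lcm a b ≤ a * b := by
  rcases Nat.eq_zero_or_pos (Nat.gcd a b) with h | h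
  · simp [Nat.eq_zero_of_gcd_eq_zero_left h]
  · rw [← Nat.gcd_mul_lcm a b]
    exact Nat.mul_le_mul_right _ (Nat.le_of_dvd h (Nat.dvd_gcd ha hb))

def IsWieferichPrime (p : ℕ) : Prop := p.Prime ∧ p ^ 2 ∣ 2 ^ (p - 1) - 1

lemma IsWieferichPrime.sq_dvd_two_pow_sub_one {p L : ℕ} (hp : IsWieferichPrime p)
    (hL : p - 1 ∣ L) : p ^ 2 ∣ 2 ^ L - 1 :=
  hp.2.trans (Nat.pow_sub_one_dvd_pow_sub_one 2 hL)

lemma isWieferichPrime_1093 : IsWieferichPrime 1093 := ⟨by norm_num, by decide +kernel⟩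

lemma isWieferichPrime_3511 : IsWieferichPrime 3511 := ⟨by norm_num, by decide +kernel⟩

lemma exists_gt_mu_two_pow_sub_one_mul_two_pow_lt_log (μ : ℕ → ℝ)
    (hμp : ∀ p n : ℕ, p.Prime → 0 < n → μ (p ^ n) = log p + log n)
    (hμmul : ∀ m n : ℕ, 0 < m → 0 < n → Nat.Coprime m n → μ (m * n) = μ m + μ n)
    (hW : {p : ℕ | IsWieferichPrime p}.Infinite) (N : ℕ) :
    ∃ L > N, μ ((2 ^ L - 1) * 2 ^ L) < log (2 ^ L) := by
  obtain ⟨q, hq, hqN⟩ := hW.exists_gt (max 3511 (N + 1))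
  have hq3511 : 3511 < q := (le_max_left _ _).trans_lt hqN
  have hqeven : 2 ∣ q - 1 := (hq.1.even_sub_one (by omega)).two_dvd
  -- 49140 = lcm 1092 3510
  set L := Nat.lcm 49140 (q - 1)
  have hqL : q - 1 ∣ L := Nat.dvd_lcm_right _ _
  have hbound : 2 * L ≤ 49140 * (q - 1) := two_mul_lcm_le_mul (by norm_num) hqeven
  have hLq : q - 1 ≤ L := Nat.le_of_dvd (Nat.lcm_pos (by norm_num) (by omega)) hqL
  refine ⟨L, by omega, mu_two_pow_sub_one_mul_two_pow_lt_log μ hμp hμmul (by omega)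
    (S := {1093, 3511, q}) ?_ ?_⟩
  · have h1093 : 1093 - 1 ∣ L := (by norm_num : 1092 ∣ 49140).trans (Nat.dvd_lcm_left _ _)
    have h3511 : 3511 - 1 ∣ L := (by norm_num : 3510 ∣ 49140).trans (Nat.dvd_lcm_left _ _)
    simp only [mem_insert, mem_singleton]
    rintro p (rfl | rfl | rfl)
    · exact ⟨isWieferichPrime_1093.1, isWieferichPrime_1093.sq_dvd_two_pow_sub_one h1093⟩
    · exact ⟨isWieferichPrime_3511.1, isWieferichPrime_3511.sq_dvd_two_pow_sub_one h3511⟩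
    · exact ⟨hq.1, hq.sq_dvd_two_pow_sub_one hqL⟩
  · have h1093 : 1093 ∉ ({3511, q} : Finset ℕ) := by
      simp only [mem_insert, mem_singleton]; omega
    have h3511 : 3511 ∉ ({q} : Finset ℕ) := by
      simp only [mem_singleton]; omega
    rw [card_insert_of_notMem h1093, card_insert_of_notMem h3511, card_singleton,
      prod_insert h1093, prod_insert h3511, prod_singleton]
    omega

theorem stmt_18 (μ : ℕ → ℝ)
    (hμp : ∀ p n : ℕ, p.Prime → 0 < n → μ (p ^ n) = Real.log p + Real.log n)
    (hμmul : ∀ m n : ℕ, 0 < m → 0 < n → Nat.Coprime m n → μ (m * n) = μ m + μ n)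
    (hWinf : {p : ℕ | p.Prime ∧ p ^ 2 ∣ 2 ^ (p - 1) - 1}.Infinite) :
    {t : ℕ × ℕ × ℕ | 0 < t.1 ∧ 0 < t.2.1 ∧ 0 < t.2.2 ∧ Nat.Coprime t.1 t.2.1 ∧
        t.1 + t.2.1 = t.2.2 ∧ Real.log t.2.2 > μ (t.1 * t.2.1 * t.2.2)}.Infinite ∧
      {L : ℕ | Real.log (2 ^ L) > μ ((2 ^ L - 1) * 2 ^ L)}.Infinite := by
  have hhits : {L : ℕ | 0 < L ∧ μ ((2 ^ L - 1) * 2 ^ L) < log (2 ^ L)}.Infinite :=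
    Set.infinite_of_forall_exists_gt fun N =>
      let ⟨L, hNL, hL⟩ := exists_gt_mu_two_pow_sub_one_mul_two_pow_lt_log μ hμp hμmul hWinf N
      ⟨L, ⟨by omega, hL⟩, hNL⟩
  refine ⟨?_, hhits.mono fun L hL => hL.2⟩
  refine (hhits.image (f := fun L => ((1, 2 ^ L - 1, 2 ^ L) : ℕ × ℕ × ℕ))
    fun a _ b _ h => Nat.pow_right_injective le_rfl (congrArg (·.2.2) h)).mono ?_
  rintro _ ⟨L, ⟨hL0, hL⟩, rfl⟩
  dsimp only [Set.mem_ofPred_eq]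
  have h2L : 1 < 2 ^ L := Nat.one_lt_two_pow hL0.ne'
  refine ⟨one_pos, by omega, by positivity, Nat.coprime_one_left _, by omega, ?_⟩
  simpa using hL
end
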